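/- arXiv:1509.08039 — 2 statements merged into one kernel-verified Lean document; each statement's English description precedes it below -/
import Mathlib

section
/- If Ω is a finite set and f : Ω → Ω is any map, then |Ω \ Ω_f| − |f(Ω \ Ω_f)| = |Ω \ f(Ω)|. -/
/-! The range of `f` splits into `f '' Ω_f`, which has `|Ω_f|` elements, and the disjoint set
`f '' (Ω \ Ω_f)`. Subtracting `|f(Ω)| = |Ω_f| + |f(Ω \ Ω_f)|` from `|Ω| = |Ω_f| + |Ω \ Ω_f|`
gives the identity. -/

variable {Ω : Type*}

def monoset (f : Ω → Ω) : Set Ω := {ω | f ⁻¹' {f ω} = {ω}}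

def NearBijection (f : Ω → Ω) : Prop :=
  ∃ A B : Set Ω, Aᶜ.Finite ∧ Bᶜ.Finite ∧ Set.BijOn f A B

def AlmostEq (f g : Ω → Ω) : Prop := {ω | f ω ≠ g ω}.Finite

noncomputable def ind (f : Ω → Ω) : ℤ :=
  (((monoset f)ᶜ.ncard : ℤ) - ((f '' (monoset f)ᶜ).ncard : ℤ)) - ((Set.range f)ᶜ.ncard : ℤ)

theorem eq_of_mem_monoset_of_apply_eq {f : Ω → Ω} {a b : Ω} (ha : a ∈ monoset f)
    (hab : f b = f a) : b = a := by
  have hb : b ∈ f ⁻¹' {f a} := hab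
  rwa [ha] at hb

theorem injOn_monoset (f : Ω → Ω) : Set.InjOn f (monoset f) :=
  fun _ ha _ _ hab => (eq_of_mem_monoset_of_apply_eq ha hab.symm).symm

theorem disjoint_image_monoset_image_compl (f : Ω → Ω) :
    Disjoint (f '' monoset f) (f '' (monoset f)ᶜ) := by
  rw [Set.disjoint_left]
  rintro _ ⟨a, ha, rfl⟩ ⟨b, hb, hab⟩
  exact hb (eq_of_mem_monoset_of_apply_eq ha hab ▸ ha)

theorem ncard_range_eq_ncard_monoset_add [Finite Ω] (f : Ω → Ω) :
    (Set.range f).ncard = (monoset f).ncard + (f '' (monoset f)ᶜ).ncard := by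
  rw [← Set.image_univ, ← Set.union_compl_self (monoset f), Set.image_union,
    Set.ncard_union_eq (disjoint_image_monoset_image_compl f), (injOn_monoset f).ncard_image]

theorem stmt12 {Ω : Type*} [Finite Ω] (f : Ω → Ω) :
    (((monoset f)ᶜ.ncard : ℤ) - ((f '' (monoset f)ᶜ).ncard : ℤ)) =
      ((Set.range f)ᶜ.ncard : ℤ) := by
  have hrange := ncard_range_eq_ncard_monoset_add f
  have hmonoset := Set.ncard_add_ncard_compl (monoset f)
  have hrange_compl := Set.ncard_add_ncard_compl (Set.range f)
  omega
end

section
/- If f, g : Ω → Ω are near-bijections with f almost equal to g, then ind(f) = ind(g): the index is invariant under modification on a finite set. -/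
/-! If a finite set `s` contains every point outside the monoset of `f`, then `f` is injective
off `s`, and counting fibres over `f '' s` gives `ind f = |s| - |(f '' sᶜ)ᶜ|`. Taking `s` to
contain also the points where `f` and `g` differ makes `f '' sᶜ = g '' sᶜ`, so both indices are
given by the same formula. -/

variable {Ω : Type*}

open Set

section Monoset

variable {f : Ω → Ω} {s t : Set Ω}

lemma eq_of_mem_monoset {x y : Ω} (hx : x ∈ monoset f) (hy : f y = f x) : y = x := by
  have hy' : y ∈ f ⁻¹' {f x} := hy
  rwa [hx] at hy'

lemma injOn_monoset_s19 : InjOn f (monoset f) :=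
  fun _ hx _ _ hxy => (eq_of_mem_monoset hx hxy.symm).symm

lemma disjoint_image_of_subset_monoset (ht : t ⊆ monoset f) (hst : Disjoint s t) :
    Disjoint (f '' s) (f '' t) := by
  rw [disjoint_left]
  rintro _ ⟨x, hx, rfl⟩ ⟨y, hy, hyx⟩
  exact disjoint_left.mp hst hx (eq_of_mem_monoset (ht hy) hyx.symm ▸ hy)

lemma ncard_sub_ncard_image_eq_of_compl_monoset_subset (hs : s.Finite)
    (hsub : (monoset f)ᶜ ⊆ s) :
    (s.ncard : ℤ) - (f '' s).ncard = (monoset f)ᶜ.ncard - (f '' (monoset f)ᶜ).ncard := by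
  set t := s \ (monoset f)ᶜ
  have ht : t ⊆ monoset f := fun _ hx => not_not.mp hx.2
  have hdisj : Disjoint (f '' (monoset f)ᶜ) (f '' t) :=
    disjoint_image_of_subset_monoset ht disjoint_sdiff_right
  have hcard : s.ncard = (monoset f)ᶜ.ncard + t.ncard := by
    rw [← ncard_sdiff_add_ncard_of_subset hsub hs, add_comm]
  have hcard_image : (f '' s).ncard = (f '' (monoset f)ᶜ).ncard + t.ncard := by
    rw [← union_sdiff_cancel hsub, image_union, ncard_union_eq hdisj
      ((hs.subset hsub).image f) (hs.sdiff.image f), (injOn_monoset_s19.mono ht).ncard_image]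
  rw [hcard, hcard_image]
  push_cast
  ring

lemma compl_image_compl_eq_of_compl_monoset_subset (hsub : (monoset f)ᶜ ⊆ s) :
    (f '' sᶜ)ᶜ = f '' s ∪ (range f)ᶜ := by
  have hdisj : Disjoint (f '' s) (f '' sᶜ) :=
    disjoint_image_of_subset_monoset (compl_subset_comm.mp hsub) disjoint_compl_right
  have hrange : range f = f '' s ∪ f '' sᶜ := by
    rw [← image_union, union_compl_self, image_univ]
  ext y
  have hnot_both : y ∈ f '' s → y ∉ f '' sᶜ := fun hy => disjoint_left.mp hdisj hy
  simp only [hrange, mem_compl_iff, mem_union, not_or]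
  tauto

lemma ind_eq_ncard_sub_ncard_compl_image (hrange : (range f)ᶜ.Finite) (hs : s.Finite)
    (hsub : (monoset f)ᶜ ⊆ s) :
    ind f = s.ncard - (f '' sᶜ)ᶜ.ncard := by
  have hdisj : Disjoint (f '' s) (range f)ᶜ :=
    disjoint_compl_right_iff_subset.mpr (image_subset_range f s)
  rw [ind, ← ncard_sub_ncard_image_eq_of_compl_monoset_subset hs hsub,
    compl_image_compl_eq_of_compl_monoset_subset hsub,
    ncard_union_eq hdisj (hs.image f) hrange]
  push_cast
  ring

end Monoset

namespace NearBijection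

variable {f : Ω → Ω}

lemma finite_compl_monoset (hf : NearBijection f) : (monoset f)ᶜ.Finite := by
  obtain ⟨A, _, hA, _, hbij⟩ := hf
  have hcollide : (A ∩ f ⁻¹' (f '' Aᶜ)).Finite :=
    Finite.of_finite_image ((hA.image f).subset <|
      (image_mono inter_subset_right).trans (image_preimage_subset f _))
      (hbij.injOn.mono inter_subset_left)
  refine (hA.union hcollide).subset fun x hx => ?_
  by_contra hx_regular
  simp only [mem_union, mem_compl_iff, mem_inter_iff, mem_preimage, not_or, not_and,
    not_not] at hx_regular
  obtain ⟨hxA, hx_not_hit⟩ := hx_regular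
  refine hx (eq_singleton_iff_unique_mem.mpr ⟨rfl, fun y hy => ?_⟩)
  have hyA : y ∈ A := by_contra fun hyA => hx_not_hit hxA ⟨y, hyA, hy⟩
  exact hbij.injOn hyA hxA hy

lemma finite_compl_range (hf : NearBijection f) : (range f)ᶜ.Finite := by
  obtain ⟨_, B, _, hB, hbij⟩ := hf
  exact hB.subset (compl_subset_compl.mpr hbij.surjOn.subset_range)

end NearBijection

theorem stmt19_general (f g : Ω → Ω)
    (hf : NearBijection f) (hg : NearBijection g) (h : AlmostEq f g) :
    ind f = ind g := by
  set s := (monoset f)ᶜ ∪ (monoset g)ᶜ ∪ {ω | f ω ≠ g ω}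
  have hs : s.Finite := (hf.finite_compl_monoset.union hg.finite_compl_monoset).union h
  have hsub_f : (monoset f)ᶜ ⊆ s := subset_union_left.trans subset_union_left
  have hsub_g : (monoset g)ᶜ ⊆ s := subset_union_right.trans subset_union_left
  have himage : f '' sᶜ = g '' sᶜ :=
    image_congr fun _ hx => not_not.mp fun hne => hx (Or.inr hne)
  rw [ind_eq_ncard_sub_ncard_compl_image hf.finite_compl_range hs hsub_f,
    ind_eq_ncard_sub_ncard_compl_image hg.finite_compl_range hs hsub_g, himage]

theorem stmt19 [Infinite Ω] (f g : Ω → Ω)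
    (hf : NearBijection f) (hg : NearBijection g) (h : AlmostEq f g) :
    ind f = ind g :=
  stmt19_general f g hf hg h
end
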